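/- arXiv:1908.00869 — 2 statements merged into one kernel-verified Lean document; each statement's English description precedes it below -/
import Mathlib

section
/- For every R > 0 there exists a constant C_R such that u(x) ≤ C_R for all x with |x| < R, for every λ > 0 and every subsolution u of the discounted equation λu + H(x,Du) = 0; i.e., the family of all subsolutions of the discounted problems, over all discount factors λ > 0, is locally equibounded from above. -/
open MeasureTheory Set
open scoped RealInnerProductSpace

noncomputable section

abbrev Euc (N : ℕ) := EuclideanSpace ℝ (Fin N)

/-- `u` is an (a.e.) subsolution of `H = a` in `ℝ^N`. -/
def IsSubsol {N : ℕ} (H : Euc N × Euc N → ℝ) (a : ℝ) (u : Euc N → ℝ) : Prop :=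
  LocallyLipschitz u ∧
    ∀ᵐ x : Euc N ∂volume, DifferentiableAt ℝ u x → H (x, gradient u x) ≤ a

/-- `u` is an (a.e.) subsolution of the discounted equation `λ u + H(x,Du) = 0`. -/
def IsDiscSubsol {N : ℕ} (H : Euc N × Euc N → ℝ) (lam : ℝ) (u : Euc N → ℝ) : Prop :=
  LocallyLipschitz u ∧
    ∀ᵐ x : Euc N ∂volume, DifferentiableAt ℝ u x →
      lam * u x + H (x, gradient u x) ≤ 0

/-- The Lagrangian associated with `H` via the Fenchel transform. -/
def Lag {N : ℕ} (H : Euc N × Euc N → ℝ) : Euc N × Euc N → ℝ :=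
  fun z => sSup (Set.range fun p : Euc N => ⟪p, z.2⟫ - H (z.1, p))

/-- `u` is a subsolution for the generalized Lagrangian `Φ`. -/
def SubsolFor {N : ℕ} (Φ : Euc N × Euc N → ℝ) (u : Euc N → ℝ) : Prop :=
  LocallyLipschitz u ∧
    ∀ᵐ x : Euc N ∂volume, DifferentiableAt ℝ u x →
      ∀ q : Euc N, fderiv ℝ u x q ≤ Φ (x, q)

/-- `u` is a `λ`-discounted subsolution for the generalized Lagrangian `Φ`. -/
def DiscSubsolFor {N : ℕ} (lam : ℝ) (Φ : Euc N × Euc N → ℝ) (u : Euc N → ℝ) : Prop :=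
  LocallyLipschitz u ∧
    ∀ᵐ x : Euc N ∂volume, DifferentiableAt ℝ u x →
      ∀ q : Euc N, lam * u x + fderiv ℝ u x q ≤ Φ (x, q)

/-- A Mather measure for the ergodic problem. -/
def MatherMeasure {N : ℕ} (H : Euc N × Euc N → ℝ) (μ : Measure (Euc N × Euc N)) : Prop :=
  IsProbabilityMeasure μ ∧ Integrable (Lag H) μ ∧ (∫ z, Lag H z ∂μ) = 0 ∧
    ∀ Φ : Euc N × Euc N → ℝ, Continuous Φ → BddBelow (Set.range Φ) →
      (∃ u, SubsolFor Φ u) → (Integrable Φ μ → 0 ≤ ∫ z, Φ z ∂μ)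

/-- A `(λ,z)`-Mather measure (relative to the maximal discounted solution `um`). -/
def DiscMatherMeasure {N : ℕ} (H : Euc N × Euc N → ℝ) (lam : ℝ) (z : Euc N)
    (um : Euc N → ℝ) (μ : Measure (Euc N × Euc N)) : Prop :=
  IsProbabilityMeasure μ ∧ Integrable (Lag H) μ ∧ (∫ w, Lag H w ∂μ) = lam * um z ∧
    ∀ Φ : Euc N × Euc N → ℝ, Continuous Φ → BddBelow (Set.range Φ) →
      ∀ u : Euc N → ℝ, DiscSubsolFor lam Φ u →
        (Integrable Φ μ → lam * u z ≤ ∫ w, Φ w ∂μ)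

/-!
Suppose `u x̄` is huge for some `‖x̄‖ < R`. Where `u > 0` the discounted inequality gives
`H (x, Du) < 0`, so coercivity bounds `‖Du‖` there; hence `max u 0` is Lipschitz on a large ball
and `u > 1` on the ball of radius `R₀` outside of which `H (·, 0) ≤ m` by (A3). Then `max u 1`
coincides with `u` where `u ≥ 1` and is locally constant elsewhere, so it is a subsolution of
`H = max m (-λ)`. Since the critical value is `0`, this level must be `m`; but no subsolution of
`H = m` exists, because `H (x, ·) > m` for all `x` near the point `x₀` of (A3).
-/

open Metric Filter
open scoped Convolution Topology

section MaxConst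

variable {E : Type*} [NormedAddCommGroup E] [NormedSpace ℝ E] {u : E → ℝ} {c : ℝ} {x : E}

theorem fderiv_max_const_of_le (h : u x ≤ c) :
    fderiv ℝ (fun y => max (u y) c) x = 0 :=
  IsLocalMin.fderiv_eq_zero <| Eventually.of_forall fun y => by
    simp only [max_eq_right h, le_max_right]

theorem fderiv_max_const_of_ge (hu : DifferentiableAt ℝ u x)
    (hv : DifferentiableAt ℝ (fun y => max (u y) c) x) (h : c ≤ u x) :
    fderiv ℝ (fun y => max (u y) c) x = fderiv ℝ u x := by
  have hmin : IsLocalMin (fun y => max (u y) c - u y) x :=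
    Eventually.of_forall fun y => by simp only [max_eq_left h, sub_self, sub_nonneg, le_max_left]
  have := hmin.fderiv_eq_zero
  rwa [fderiv_fun_sub hv hu, sub_eq_zero] at this

end MaxConst

theorem norm_integral_smul_le_of_ae_norm_le {α G : Type*} [MeasurableSpace α] {ν : Measure α}
    [NormedAddCommGroup G] [NormedSpace ℝ G] {ψ : α → ℝ} (hψ0 : ∀ y, 0 ≤ ψ y)
    (hψi : Integrable ψ ν) (hψ1 : ∫ y, ψ y ∂ν = 1) {g : α → G} {L : ℝ}
    (hg : ∀ᵐ y ∂ν, ψ y ≠ 0 → ‖g y‖ ≤ L) :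
    ‖∫ y, ψ y • g y ∂ν‖ ≤ L := by
  have hpt : ∀ᵐ y ∂ν, ‖ψ y • g y‖ ≤ ψ y * L := by
    filter_upwards [hg] with y hy
    by_cases h : ψ y = 0
    · simp [h]
    · rw [norm_smul, Real.norm_of_nonneg (hψ0 y)]
      exact mul_le_mul_of_nonneg_left (hy h) (hψ0 y)
  calc ‖∫ y, ψ y • g y ∂ν‖ ≤ ∫ y, ‖ψ y • g y‖ ∂ν := norm_integral_le_integral_norm _
    _ ≤ ∫ y, ψ y * L ∂ν :=
      integral_mono_of_nonneg (ae_of_all _ fun _ => norm_nonneg _) (hψi.mul_const L) hpt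
    _ = L := by rw [integral_mul_const, hψ1, one_mul]

section Mollification

variable {E F : Type*} [NormedAddCommGroup E] [NormedSpace ℝ E] [FiniteDimensional ℝ E]
  [MeasurableSpace E] [BorelSpace E] [NormedAddCommGroup F] [NormedSpace ℝ F]
  [FiniteDimensional ℝ F] {μ : Measure E} [μ.IsAddHaarMeasure] {u : E → F}

theorem LocallyLipschitz.ae_differentiableAt (hu : LocallyLipschitz u) :
    ∀ᵐ x ∂μ, DifferentiableAt ℝ u x := by
  have hball (n : ℕ) : ∀ᵐ x ∂μ, x ∈ ball (0 : E) n → DifferentiableAt ℝ u x := by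
    obtain ⟨K, hK⟩ := hu.locallyLipschitzOn.exists_lipschitzOnWith_of_compact
      (isCompact_closedBall (0 : E) n)
    filter_upwards [(hK.mono ball_subset_closedBall).ae_differentiableWithinAt_of_mem]
      with x hx hxn
    exact (hx hxn).differentiableAt (isOpen_ball.mem_nhds hxn)
  filter_upwards [ae_all_iff.2 hball] with x hx
  obtain ⟨n, hn⟩ := exists_nat_gt ‖x‖
  exact hx n (mem_ball_zero_iff.2 hn)

theorem LocallyLipschitz.hasFDerivAt_convolution (hu : LocallyLipschitz u) {ψ : E → ℝ}
    (hψ : Continuous ψ) (hψs : HasCompactSupport ψ) (x₀ : E) :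
    HasFDerivAt (ψ ⋆[ContinuousLinearMap.lsmul ℝ ℝ, μ] u)
      (∫ y, ψ y • fderiv ℝ u (x₀ - y) ∂μ) x₀ := by
  obtain ⟨r, hr⟩ := hψs.isCompact.isBounded.subset_closedBall (0 : E)
  obtain ⟨K, hK⟩ := hu.locallyLipschitzOn.exists_lipschitzOnWith_of_compact
    (isCompact_closedBall x₀ (1 + r))
  have hcont (x : E) : Continuous fun y => ψ y • u (x - y) :=
    hψ.smul (hu.continuous.comp (continuous_sub_left x))
  have hlip (y : E) : LipschitzOnWith (Real.nnabs (‖ψ y‖ * K)) (fun x => ψ y • u (x - y))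
      (ball x₀ 1) := by
    refine lipschitzOnWith_iff_norm_sub_le.2 fun x hx x' hx' => ?_
    by_cases hy : y ∈ tsupport ψ
    · have hmaps : MapsTo (fun x => x - y) (ball x₀ 1) (closedBall x₀ (1 + r)) := by
        intro z hz
        have hyr := mem_closedBall_zero_iff.1 (hr hy)
        rw [mem_ball, dist_eq_norm] at hz
        rw [mem_closedBall, dist_eq_norm, sub_right_comm]
        exact (norm_sub_le _ _).trans (by linarith)
      have := lipschitzOnWith_iff_norm_sub_le.1 hK (hmaps hx) (hmaps hx')
      rw [sub_sub_sub_cancel_right] at this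
      rw [← smul_sub, norm_smul, Real.coe_nnabs, abs_of_nonneg (by positivity), mul_assoc]
      exact mul_le_mul_of_nonneg_left this (norm_nonneg _)
    · simp [image_eq_zero_of_notMem_tsupport hy]
  have hdiff : ∀ᵐ y ∂μ, DifferentiableAt ℝ u (x₀ - y) :=
    (Measure.measurePreserving_sub_left μ x₀).quasiMeasurePreserving.ae
      hu.ae_differentiableAt
  have key := hasFDerivAt_integral_of_dominated_loc_of_lip
    (μ := μ) (F := fun x y => ψ y • u (x - y))
    (F' := fun y => ψ y • fderiv ℝ u (x₀ - y)) (ball_mem_nhds x₀ one_pos)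
    (Eventually.of_forall fun x => (hcont x).aestronglyMeasurable)
    ((hcont x₀).integrable_of_hasCompactSupport hψs.smul_right)
    ((hψ.measurable.smul ((measurable_fderiv ℝ u).comp
      (measurable_const.sub measurable_id : Measurable fun y : E => x₀ - y))).aestronglyMeasurable)
    (Eventually.of_forall hlip)
    ((hψ.integrable_of_hasCompactSupport hψs).norm.mul_const _) ?_
  · convert key.2 using 1
    ext x
    simp only [convolution_def, ContinuousLinearMap.lsmul_apply]
  filter_upwards [hdiff] with y hy
  have := hy.hasFDerivAt.comp x₀ ((hasFDerivAt_id x₀).sub_const y)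
  rw [ContinuousLinearMap.comp_id] at this
  exact this.const_smul (ψ y)

/-- The derivative of `ψ ⋆ u` is `ψ ⋆ Du`, which is bounded by `L` along the segment once the
support of `ψ` is small; let `ψ` shrink to a Dirac mass. -/
theorem LocallyLipschitz.norm_sub_le_of_ae_norm_fderiv_le (hu : LocallyLipschitz u)
    {Ω : Set E} (hΩ : IsOpen Ω) {L : ℝ} (hL : ∀ᵐ x ∂μ, x ∈ Ω → ‖fderiv ℝ u x‖ ≤ L)
    {a b : E} (hab : segment ℝ a b ⊆ Ω) :
    ‖u b - u a‖ ≤ L * ‖b - a‖ := by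
  have hcompact : IsCompact (segment ℝ a b) := by
    rw [segment_eq_image_lineMap]
    exact isCompact_Icc.image AffineMap.lineMap_continuous
  obtain ⟨δ, hδ, hthick⟩ := hcompact.exists_thickening_subset_open hΩ hab
  let φ (n : ℕ) : ContDiffBump (0 : E) :=
    ⟨δ / (2 * (n + 1)), δ / (n + 1), by positivity, by
      apply div_lt_div_of_pos_left hδ (by positivity); linarith⟩
  have hφ : Tendsto (fun n => (φ n).rOut) atTop (𝓝 0) := by
    simpa [φ, div_eq_mul_one_div δ] using tendsto_one_div_add_atTop_nhds_zero_nat.const_mul δ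
  have hmollified (n : ℕ) : ‖((φ n).normed μ ⋆[ContinuousLinearMap.lsmul ℝ ℝ, μ] u) b -
      ((φ n).normed μ ⋆[ContinuousLinearMap.lsmul ℝ ℝ, μ] u) a‖ ≤ L * ‖b - a‖ := by
    refine (convex_segment a b).norm_image_sub_le_of_norm_hasFDerivWithin_le
      (fun x _ => (hu.hasFDerivAt_convolution (φ n).continuous_normed
        (φ n).hasCompactSupport_normed x).hasFDerivWithinAt) (fun x hx => ?_)
      (left_mem_segment ℝ a b) (right_mem_segment ℝ a b)
    refine norm_integral_smul_le_of_ae_norm_le (φ n).nonneg_normed (φ n).integrable_normed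
      (φ n).integral_normed ?_
    filter_upwards [(Measure.measurePreserving_sub_left μ x).quasiMeasurePreserving.ae hL]
      with y hy hψy
    have hy' : ‖y‖ < δ := by
      have := (φ n).support_normed_eq (μ := μ) ▸ Function.mem_support.2 hψy
      rw [mem_ball_zero_iff] at this
      exact this.trans_le (div_le_self hδ.le (by linarith [(n.cast_nonneg : (0:ℝ) ≤ n)]))
    refine hy (hthick (mem_thickening_iff.2 ⟨x, hx, ?_⟩))
    simpa [dist_eq_norm] using hy'
  exact le_of_tendsto' (((ContDiffBump.convolution_tendsto_right_of_continuous hφ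
    hu.continuous b).sub (ContDiffBump.convolution_tendsto_right_of_continuous hφ
    hu.continuous a)).norm) hmollified

end Mollification

def IsLocallyUniformlyCoercive {N : ℕ} (H : Euc N × Euc N → ℝ) : Prop :=
  ∀ R : ℝ, 0 < R → ∀ C : ℝ, ∃ r : ℝ, ∀ x p : Euc N, ‖x‖ ≤ R → r ≤ ‖p‖ → C ≤ H (x, p)

section Subsolutions

variable {N : ℕ} {H : Euc N × Euc N → ℝ} {a lam : ℝ} {u : Euc N → ℝ}

theorem IsLocallyUniformlyCoercive.tendsto_cocompact (hH : IsLocallyUniformlyCoercive H)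
    (x : Euc N) : Tendsto (fun p => H (x, p)) (cocompact _) atTop := by
  refine tendsto_atTop.2 fun C => ?_
  obtain ⟨r, hr⟩ := hH (‖x‖ + 1) (by positivity) C
  filter_upwards [tendsto_norm_cocompact_atTop.eventually_ge_atTop r] with p hp
  exact hr x p (by linarith) hp

theorem IsSubsol.exists_le (hu : IsSubsol H a u) (hH : Continuous H)
    (hcoer : IsLocallyUniformlyCoercive H) (x₀ : Euc N) : ∃ p, H (x₀, p) ≤ a := by
  by_contra! hx₀
  obtain ⟨r, hr⟩ := hcoer (‖x₀‖ + 1) (by positivity) (a + 1)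
  have hcompact : ∀ᶠ x in 𝓝 x₀, ∀ p ∈ closedBall (0 : Euc N) r, a < H (x, p) :=
    (isCompact_closedBall 0 r).eventually_forall_of_forall_eventually fun p _ =>
      (hH.tendsto (x₀, p)).eventually (lt_mem_nhds (hx₀ p))
  have hnear : ∀ᶠ x in 𝓝 x₀, ∀ p, a < H (x, p) := by
    filter_upwards [hcompact, closedBall_mem_nhds x₀ one_pos] with x hx hx₁ p
    by_cases hp : ‖p‖ ≤ r
    · exact hx p (mem_closedBall_zero_iff.2 hp)
    · linarith [hr x p (norm_le_of_mem_closedBall hx₁) (le_of_not_ge hp)]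
  have hnull : volume {x | ∀ p, a < H (x, p)} = 0 := by
    rw [measure_eq_zero_iff_ae_notMem]
    filter_upwards [hu.2, hu.1.ae_differentiableAt] with x hx hdx hcon
    exact (hcon _).not_ge (hx hdx)
  exact (Measure.measure_pos_of_mem_nhds volume hnear).ne' hnull

theorem bddBelow_setOf_isSubsol (hH : Continuous H) (hcoer : IsLocallyUniformlyCoercive H) :
    BddBelow {a | ∃ u, IsSubsol H a u} := by
  obtain ⟨p₀, hp₀⟩ := (hH.comp (continuous_const.prodMk continuous_id)).exists_forall_le
    (hcoer.tendsto_cocompact 0)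
  refine ⟨H (0, p₀), fun a ⟨u, hu⟩ => ?_⟩
  obtain ⟨p, hp⟩ := hu.exists_le hH hcoer 0
  exact (hp₀ p).trans hp

theorem IsDiscSubsol.ae_norm_fderiv_max_zero_le (hu : IsDiscSubsol H lam u) (hlam : 0 < lam)
    {ρ r : ℝ} (hr : 0 ≤ r) (hcoer : ∀ x p : Euc N, ‖x‖ ≤ ρ → r ≤ ‖p‖ → 0 ≤ H (x, p)) :
    ∀ᵐ x, ‖x‖ ≤ ρ → ‖fderiv ℝ (fun y => max (u y) 0) x‖ ≤ r := by
  filter_upwards [hu.2, hu.1.ae_differentiableAt, (hu.1.max_const 0).ae_differentiableAt]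
    with x hx hdu hdv hxρ
  rcases le_or_gt (u x) 0 with h | h
  · rwa [fderiv_max_const_of_le h, norm_zero]
  · have hgrad : ‖fderiv ℝ u x‖ = ‖gradient u x‖ :=
      ((InnerProductSpace.toDual ℝ (Euc N)).symm.norm_map _).symm
    rw [fderiv_max_const_of_ge hdu hdv h.le, hgrad]
    by_contra! hgt
    nlinarith [hx hdu, hcoer x _ hxρ hgt.le]

theorem IsDiscSubsol.le_max_zero_add_mul_norm_sub (hu : IsDiscSubsol H lam u) (hlam : 0 < lam)
    {ρ r : ℝ} (hr : 0 ≤ r) (hcoer : ∀ x p : Euc N, ‖x‖ ≤ ρ → r ≤ ‖p‖ → 0 ≤ H (x, p))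
    {x y : Euc N} (hx : ‖x‖ < ρ) (hy : ‖y‖ < ρ) :
    u x ≤ max (u y) 0 + r * ‖y - x‖ := by
  have hL : ∀ᵐ z, z ∈ ball (0 : Euc N) ρ → ‖fderiv ℝ (fun y => max (u y) 0) z‖ ≤ r := by
    filter_upwards [hu.ae_norm_fderiv_max_zero_le hlam hr hcoer] with z hz hzρ
    exact hz (mem_ball_zero_iff.1 hzρ).le
  have := (hu.1.max_const 0).norm_sub_le_of_ae_norm_fderiv_le isOpen_ball hL
    ((convex_ball 0 ρ).segment_subset (mem_ball_zero_iff.2 hx) (mem_ball_zero_iff.2 hy))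
  rw [Real.norm_eq_abs, abs_le] at this
  linarith [le_max_left (u x) 0]

theorem IsDiscSubsol.isSubsol_max_const (hu : IsDiscSubsol H lam u) (hlam : 0 ≤ lam)
    {c m : ℝ} (hm : ∀ x, u x ≤ c → H (x, 0) ≤ m) :
    IsSubsol H (max m (-(lam * c))) (fun y => max (u y) c) := by
  refine ⟨hu.1.max_const c, ?_⟩
  filter_upwards [hu.2, hu.1.ae_differentiableAt] with x hx hdu hdv
  rcases le_total (u x) c with h | h
  · rw [gradient, fderiv_max_const_of_le h, map_zero]
    exact (hm x h).trans (le_max_left _ _)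
  · rw [gradient, fderiv_max_const_of_ge hdu hdv h, ← gradient]
    have := mul_le_mul_of_nonneg_left h hlam
    exact le_max_of_le_right (by linarith [hx hdu])

end Subsolutions

theorem stmt2_general {N : ℕ} (H : Euc N × Euc N → ℝ)
    (hA1 : Continuous H)
    (hA2coer : ∀ R : ℝ, 0 < R → ∀ C : ℝ, ∃ r : ℝ, ∀ x p : Euc N,
      ‖x‖ ≤ R → r ≤ ‖p‖ → C ≤ H (x, p))
    (hA3 : ∃ ε > (0 : ℝ), ∃ m : ℝ,
      (∃ R : ℝ, ∀ x : Euc N, R ≤ ‖x‖ → ∀ p : Euc N, ‖p‖ ≤ ε → H (x, p) ≤ m) ∧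
      (∃ x₀ : Euc N, ∀ p : Euc N, m < H (x₀, p)))
    (hcrit : sInf {a : ℝ | ∃ u : Euc N → ℝ, IsSubsol H a u} = 0)
 :
    ∀ R : ℝ, 0 < R → ∃ C : ℝ, ∀ lam : ℝ, 0 < lam →
      ∀ u : Euc N → ℝ, IsDiscSubsol H lam u → ∀ x : Euc N, ‖x‖ < R → u x ≤ C := by
  intro R hR
  obtain ⟨ε, hε, m, ⟨R₀, hfar⟩, x₀, hx₀⟩ := hA3
  obtain ⟨r, hr⟩ := hA2coer (R + |R₀| + 1) (by positivity) 0
  refine ⟨max r 0 * (R + |R₀|) + 1, fun lam hlam u hu x hx => ?_⟩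
  by_contra! hbig
  have hlarge (y : Euc N) (hy : ‖y‖ ≤ R₀) : 1 < u y := by
    have hR₀ := le_abs_self R₀
    have hu_xy := hu.le_max_zero_add_mul_norm_sub hlam (le_max_right r 0)
      (fun x p hx hp => hr x p hx ((le_max_left r 0).trans hp)) (x := x) (y := y)
      (by linarith [abs_nonneg R₀]) (by linarith)
    have hdist := mul_le_mul_of_nonneg_left
      ((norm_sub_le y x).trans (add_le_add (hy.trans hR₀) hx.le)) (le_max_right r 0)
    have : 1 < max (u y) 0 := by linarith
    exact (lt_max_iff.1 this).resolve_right (by norm_num)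
  have hw := hu.isSubsol_max_const hlam.le (c := 1) fun y hy =>
    hfar y (le_of_not_ge fun h => (hlarge y h).not_ge hy) 0 (by simpa using hε.le)
  obtain ⟨p, hp⟩ := hw.exists_le hA1 hA2coer x₀
  have h0 : 0 ≤ max m (-(lam * 1)) :=
    hcrit ▸ csInf_le (bddBelow_setOf_isSubsol hA1 hA2coer) ⟨_, hw⟩
  rcases max_cases m (-(lam * 1)) with ⟨h, _⟩ | ⟨h, _⟩ <;> linarith [hx₀ p]

theorem stmt2 {N : ℕ} (hN : 1 ≤ N) (H : Euc N × Euc N → ℝ)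
    (hA1 : Continuous H)
    (hA2conv : ∀ x : Euc N, ConvexOn ℝ Set.univ fun p => H (x, p))
    (hA2coer : ∀ R : ℝ, 0 < R → ∀ C : ℝ, ∃ r : ℝ, ∀ x p : Euc N,
      ‖x‖ ≤ R → r ≤ ‖p‖ → C ≤ H (x, p))
    (hA3 : ∃ ε > (0 : ℝ), ∃ m : ℝ,
      (∃ R : ℝ, ∀ x : Euc N, R ≤ ‖x‖ → ∀ p : Euc N, ‖p‖ ≤ ε → H (x, p) ≤ m) ∧
      (∃ x₀ : Euc N, ∀ p : Euc N, m < H (x₀, p)))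
    (hcrit : sInf {a : ℝ | ∃ u : Euc N → ℝ, IsSubsol H a u} = 0)
 :
    ∀ R : ℝ, 0 < R → ∃ C : ℝ, ∀ lam : ℝ, 0 < lam →
      ∀ u : Euc N → ℝ, IsDiscSubsol H lam u → ∀ x : Euc N, ‖x‖ < R → u x ≤ C :=
  stmt2_general H hA1 hA2coer hA3 hcrit
end
end

section
/- There exists a constant C > 0 such that u_λ(x) ≥ −C for every λ > 0 and every x ∈ ℝ^N; i.e., the maximal subsolutions u_λ are bounded from below uniformly in λ. -/
/-!
Fix `λ > 0`. Since `c = 0`, there is a subsolution `w` of `H = a` with `a < min λ 1`, and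
`m < a` because `H (x₀, ·) > m` everywhere. By coercivity `|Dw| ≤ r` a.e. on a ball `B_R`, with
`r` independent of `λ`; mollifying shows that `w` is then `r`-Lipschitz on `B_R`. Outside `B_R`,
(A3) makes the cone `-1 - ε |x|` a subsolution of `H = a`, and, as `m ≤ 0`, every constant
`-C ≤ 0` a subsolution of the discounted equation. Truncating a translate of `w` from above by the
cone and from below by `-C`, with `C = (2 r + ε) R + 2`, changes it only outside `B_R` and gives a
discounted subsolution `v ≥ -C`; hence `u_λ ≥ -C`. Truncations stay a.e. subsolutions because at
a.e. point a minimum or maximum of two locally Lipschitz functions touches one of them, with the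
same gradient.
-/

open MeasureTheory Set
open scoped RealInnerProductSpace

noncomputable section

open Metric Filter Topology ContinuousLinearMap
open scoped NNReal Convolution

section Rademacher

variable {E F : Type*} [NormedAddCommGroup E] [NormedSpace ℝ E] [FiniteDimensional ℝ E]
  [MeasurableSpace E] [BorelSpace E] {μ : Measure E} [μ.IsAddHaarMeasure]
  [NormedAddCommGroup F] [NormedSpace ℝ F] [FiniteDimensional ℝ F]

theorem LocallyLipschitz.ae_differentiableAt_s3 {f : E → F} (hf : LocallyLipschitz f) :
    ∀ᵐ x ∂μ, DifferentiableAt ℝ f x := by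
  have hball (n : ℕ) : ∀ᵐ x ∂μ, x ∈ ball (0 : E) n → DifferentiableAt ℝ f x := by
    obtain ⟨K, hK⟩ := hf.locallyLipschitzOn.exists_lipschitzOnWith_of_compact
      (isCompact_closedBall (0 : E) n)
    filter_upwards [(hK.mono ball_subset_closedBall).ae_differentiableWithinAt_of_mem] with x hx hxn
    exact (hx hxn).differentiableAt (isOpen_ball.mem_nhds hxn)
  filter_upwards [ae_all_iff.2 hball] with x hx
  obtain ⟨n, hn⟩ := exists_nat_gt ‖x‖
  exact hx n (mem_ball_zero_iff.2 hn)

end Rademacher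

section Mollification

variable {E : Type*} [NormedAddCommGroup E] [NormedSpace ℝ E] [FiniteDimensional ℝ E]
  [MeasurableSpace E] [BorelSpace E] {μ : Measure E} [μ.IsAddHaarMeasure] {f : E → ℝ}

theorem LipschitzWith.hasFDerivAt_normed_convolution {L : ℝ≥0} (hf : LipschitzWith L f)
    (φ : ContDiffBump (0 : E)) (x : E) :
    HasFDerivAt (φ.normed μ ⋆[lsmul ℝ ℝ, μ] f)
      (∫ t, φ.normed μ t • fderiv ℝ f (x - t) ∂μ) x := by
  have hφ : Continuous (φ.normed μ) := φ.continuous_normed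
  have hF (y : E) : Continuous fun t => φ.normed μ t * f (y - t) :=
    hφ.mul (hf.continuous.comp (continuous_const.sub continuous_id))
  have hdiff : ∀ᵐ t ∂μ, DifferentiableAt ℝ f (x - t) :=
    (quasiMeasurePreserving_sub_left_of_right_invariant μ x).ae
      hf.locallyLipschitz.ae_differentiableAt_s3
  have hconv : (φ.normed μ ⋆[lsmul ℝ ℝ, μ] f) = fun y => ∫ t, φ.normed μ t * f (y - t) ∂μ := by
    ext y; simp [convolution_def]
  rw [hconv]
  refine (hasFDerivAt_integral_of_dominated_loc_of_lip (bound := fun t => φ.normed μ t * L)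
    univ_mem (.of_forall fun y => (hF y).aestronglyMeasurable)
    ((hF x).integrable_of_hasCompactSupport φ.hasCompactSupport_normed.mul_right)
    (hφ.aestronglyMeasurable.smul
      ((measurable_fderiv ℝ f).comp (measurable_const.sub measurable_id)).aestronglyMeasurable)
    (.of_forall fun t => ?_) (φ.integrable_normed.mul_const _) ?_).2
  · rw [Real.nnabs_of_nonneg (mul_nonneg (φ.nonneg_normed t) L.coe_nonneg)]
    refine LipschitzOnWith.of_dist_le_mul fun y _ z _ => ?_
    rw [Real.dist_eq, ← mul_sub, abs_mul, abs_of_nonneg (φ.nonneg_normed t),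
      Real.coe_toNNReal _ (mul_nonneg (φ.nonneg_normed t) L.coe_nonneg), mul_assoc,
      ← Real.dist_eq, ← dist_sub_right y z t]
    exact mul_le_mul_of_nonneg_left (hf.dist_le_mul _ _) (φ.nonneg_normed t)
  · filter_upwards [hdiff] with t ht
    simpa using (ht.hasFDerivAt.comp x ((hasFDerivAt_id x).sub_const t)).const_mul (φ.normed μ t)

theorem ContDiffBump.norm_integral_normed_smul_fderiv_le (φ : ContDiffBump (0 : E)) {x : E}
    {r : ℝ} (hbd : ∀ᵐ z ∂μ, z ∈ ball x φ.rOut → ‖fderiv ℝ f z‖ ≤ r) :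
    ‖∫ t, φ.normed μ t • fderiv ℝ f (x - t) ∂μ‖ ≤ r := by
  have hbd' : ∀ᵐ t ∂μ, ‖φ.normed μ t • fderiv ℝ f (x - t)‖ ≤ φ.normed μ t * r := by
    filter_upwards [(quasiMeasurePreserving_sub_left_of_right_invariant μ x).ae hbd] with t ht
    rw [norm_smul, Real.norm_of_nonneg (φ.nonneg_normed t)]
    by_cases h0 : φ.normed μ t = 0
    · simp [h0]
    refine mul_le_mul_of_nonneg_left (ht ?_) (φ.nonneg_normed t)
    have ht : t ∈ ball (0 : E) φ.rOut := φ.support_normed_eq (μ := μ) ▸ h0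
    rwa [mem_ball, dist_eq_norm, sub_sub_cancel_left, norm_neg, ← mem_ball_zero_iff]
  calc ‖∫ t, φ.normed μ t • fderiv ℝ f (x - t) ∂μ‖
      ≤ ∫ t, φ.normed μ t * r ∂μ :=
        norm_integral_le_of_norm_le (φ.integrable_normed.mul_const r) hbd'
    _ = r := by rw [integral_mul_const, φ.integral_normed, one_mul]

theorem LipschitzWith.lipschitzOnWith_ball_of_ae_norm_fderiv_le {L r : ℝ≥0}
    (hf : LipschitzWith L f) {x₀ : E} {ρ : ℝ}
    (hbd : ∀ᵐ z ∂μ, z ∈ ball x₀ ρ → ‖fderiv ℝ f z‖ ≤ r) : LipschitzOnWith r f (ball x₀ ρ) := by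
  refine LipschitzOnWith.of_dist_le_mul fun x hx y hy => ?_
  set δ₀ := (ρ - max (dist x x₀) (dist y x₀)) / 2
  have hδ₀ : 0 < δ₀ := half_pos (sub_pos.2 (max_lt hx hy))
  have hxy : x ∈ ball x₀ (ρ - δ₀) ∧ y ∈ ball x₀ (ρ - δ₀) := by
    rw [mem_ball] at hx hy
    simp only [mem_ball, δ₀]
    constructor <;>
      linarith [le_max_left (dist x x₀) (dist y x₀), le_max_right (dist x x₀) (dist y x₀)]
  have hscale : ∀ δ ∈ Ioo 0 δ₀, dist (f x) (f y) ≤ r * dist x y + 2 * (L * δ) := by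
    rintro δ ⟨hδ, hδδ₀⟩
    let φ : ContDiffBump (0 : E) := ⟨δ / 2, δ, half_pos hδ, half_lt_self hδ⟩
    set G := φ.normed μ ⋆[lsmul ℝ ℝ, μ] f
    have happrox (z : E) : dist (G z) (f z) ≤ L * δ :=
      φ.dist_normed_convolution_le hf.continuous.aestronglyMeasurable fun w hw =>
        (hf.dist_le_mul w z).trans (by gcongr; exact (mem_ball.1 hw).le)
    have hG (z : E) (hz : z ∈ ball x₀ (ρ - δ₀)) :
        ‖∫ t, φ.normed μ t • fderiv ℝ f (z - t) ∂μ‖ ≤ r :=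
      φ.norm_integral_normed_smul_fderiv_le <| hbd.mono fun w hw hwz => hw <| by
        rw [mem_ball] at hz hwz ⊢
        linarith [dist_triangle w z x₀, show φ.rOut = δ from rfl]
    have hmvt : ‖G x - G y‖ ≤ r * ‖x - y‖ :=
      (convex_ball x₀ (ρ - δ₀)).norm_image_sub_le_of_norm_hasFDerivWithin_le
        (fun z _ => (hf.hasFDerivAt_normed_convolution φ z).hasFDerivWithinAt) hG hxy.2 hxy.1
    rw [← dist_eq_norm, ← dist_eq_norm] at hmvt
    linarith [dist_triangle4 (f x) (G x) (G y) (f y), happrox x, happrox y, dist_comm (f x) (G x)]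
  have hlim : Tendsto (fun δ => r * dist x y + 2 * (L * δ)) (𝓝[>] 0) (𝓝 (r * dist x y)) :=
    tendsto_nhdsWithin_of_tendsto_nhds (Continuous.tendsto' (by fun_prop) 0 _ (by simp))
  exact ge_of_tendsto hlim (eventually_of_mem (Ioo_mem_nhdsGT hδ₀) hscale)

theorem LocallyLipschitz.lipschitzOnWith_ball_of_ae_norm_fderiv_le {r : ℝ≥0}
    (hf : LocallyLipschitz f) {x₀ : E} {ρ : ℝ}
    (hbd : ∀ᵐ z ∂μ, z ∈ ball x₀ ρ → ‖fderiv ℝ f z‖ ≤ r) : LipschitzOnWith r f (ball x₀ ρ) := by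
  obtain ⟨L, hL⟩ :=
    hf.locallyLipschitzOn.exists_lipschitzOnWith_of_compact (isCompact_closedBall x₀ ρ)
  obtain ⟨g, hg, hfg⟩ := hL.extend_real
  have hfg' : EqOn f g (ball x₀ ρ) := hfg.mono ball_subset_closedBall
  have hgbd : ∀ᵐ z ∂μ, z ∈ ball x₀ ρ → ‖fderiv ℝ g z‖ ≤ r := by
    filter_upwards [hbd] with z hz hzb
    rw [← Filter.EventuallyEq.fderiv_eq (eventually_of_mem (isOpen_ball.mem_nhds hzb) hfg')]
    exact hz hzb
  intro x hx y hy
  rw [hfg' hx, hfg' hy]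
  exact hg.lipschitzOnWith_ball_of_ae_norm_fderiv_le hgbd hx hy

end Mollification

section Gradient

variable {E : Type*} [NormedAddCommGroup E] [InnerProductSpace ℝ E] [CompleteSpace E]

theorem norm_gradient_eq_norm_fderiv (f : E → ℝ) (x : E) : ‖gradient f x‖ = ‖fderiv ℝ f x‖ :=
  (InnerProductSpace.toDual ℝ E).symm.norm_map _

theorem norm_gradient_le_of_lipschitzWith {f : E → ℝ} {K : ℝ≥0} (hf : LipschitzWith K f)
    (x : E) : ‖gradient f x‖ ≤ K :=
  (norm_gradient_eq_norm_fderiv f x).trans_le (norm_fderiv_le_of_lipschitz ℝ hf)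

theorem gradient_eq_of_le_of_eq {f g : E → ℝ} {z : E} (hf : DifferentiableAt ℝ f z)
    (hg : DifferentiableAt ℝ g z) (hle : ∀ y, f y ≤ g y) (heq : f z = g z) :
    gradient f z = gradient g z := by
  have hmin : IsLocalMin (fun y => g y - f y) z :=
    .of_forall fun y => by simp only [heq, sub_self, sub_nonneg, hle y]
  have hzero := hmin.fderiv_eq_zero
  rw [fderiv_fun_sub hg hf, sub_eq_zero] at hzero
  rw [gradient, gradient, hzero]

variable [FiniteDimensional ℝ E] [MeasurableSpace E] [BorelSpace E] {μ : Measure E}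
  [μ.IsAddHaarMeasure] {Q : E → ℝ → E → Prop} {u v : E → ℝ}

theorem LocallyLipschitz.ae_min_of_ae (hu : LocallyLipschitz u) (hv : LocallyLipschitz v)
    (hQu : ∀ᵐ z ∂μ, DifferentiableAt ℝ u z → u z ≤ v z → Q z (u z) (gradient u z))
    (hQv : ∀ᵐ z ∂μ, DifferentiableAt ℝ v z → v z ≤ u z → Q z (v z) (gradient v z)) :
    ∀ᵐ z ∂μ, DifferentiableAt ℝ (fun y => min (u y) (v y)) z →
      Q z (min (u z) (v z)) (gradient (fun y => min (u y) (v y)) z) := by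
  filter_upwards [hQu, hQv, hu.ae_differentiableAt_s3, hv.ae_differentiableAt_s3]
    with z hQu hQv hdu hdv hd
  rcases le_total (u z) (v z) with h | h
  · rw [min_eq_left h, gradient_eq_of_le_of_eq hd hdu (fun y => min_le_left _ _) (min_eq_left h)]
    exact hQu hdu h
  · rw [min_eq_right h, gradient_eq_of_le_of_eq hd hdv (fun y => min_le_right _ _) (min_eq_right h)]
    exact hQv hdv h

theorem LocallyLipschitz.ae_max_of_ae (hu : LocallyLipschitz u) (hv : LocallyLipschitz v)
    (hQu : ∀ᵐ z ∂μ, DifferentiableAt ℝ u z → v z ≤ u z → Q z (u z) (gradient u z))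
    (hQv : ∀ᵐ z ∂μ, DifferentiableAt ℝ v z → u z ≤ v z → Q z (v z) (gradient v z)) :
    ∀ᵐ z ∂μ, DifferentiableAt ℝ (fun y => max (u y) (v y)) z →
      Q z (max (u z) (v z)) (gradient (fun y => max (u y) (v y)) z) := by
  filter_upwards [hQu, hQv, hu.ae_differentiableAt_s3, hv.ae_differentiableAt_s3]
    with z hQu hQv hdu hdv hd
  rcases le_total (v z) (u z) with h | h
  · rw [max_eq_left h,
      ← gradient_eq_of_le_of_eq hdu hd (fun y => le_max_left _ _) (max_eq_left h).symm]
    exact hQu hdu h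
  · rw [max_eq_right h,
      ← gradient_eq_of_le_of_eq hdv hd (fun y => le_max_right _ _) (max_eq_right h).symm]
    exact hQv hdv h

end Gradient

theorem exists_of_ae_of_eventually_nhds {X : Type*} [TopologicalSpace X] [MeasurableSpace X]
    {μ : Measure X} [μ.IsOpenPosMeasure] {P Q : X → Prop} {x₀ : X} (hP : ∀ᵐ x ∂μ, P x)
    (hQ : ∀ᶠ x in 𝓝 x₀, Q x) : ∃ x, P x ∧ Q x := by
  by_contra! h
  have hnull : μ {x | Q x} = 0 := measure_mono_null (fun x hx hPx => h x hPx hx) hP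
  exact (Measure.measure_pos_of_mem_nhds μ hQ).ne' hnull

theorem Continuous.bddAbove_range_of_forall_norm_ge {E : Type*} [NormedAddCommGroup E]
    [ProperSpace E] {g : E → ℝ} (hg : Continuous g) {R m : ℝ} (hout : ∀ x, R ≤ ‖x‖ → g x ≤ m) :
    BddAbove (range g) := by
  obtain ⟨M, hM⟩ := (isCompact_closedBall (0 : E) R).bddAbove_image hg.continuousOn
  refine ⟨max M m, forall_mem_range.2 fun x => ?_⟩
  rcases le_total ‖x‖ R with hx | hx
  · exact (hM (mem_image_of_mem g (mem_closedBall_zero_iff.2 hx))).trans (le_max_left _ _)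
  · exact (hout x hx).trans (le_max_right _ _)

theorem lipschitzWith_const_sub_mul_norm {E : Type*} [SeminormedAddCommGroup E] (c : ℝ) {ε : ℝ}
    (hε : 0 ≤ ε) : LipschitzWith (Real.toNNReal ε) fun x : E => c - ε * ‖x‖ := by
  refine LipschitzWith.of_dist_le_mul fun x y => ?_
  rw [Real.coe_toNNReal _ hε, Real.dist_eq, dist_eq_norm, sub_sub_sub_cancel_left, ← mul_sub,
    abs_mul, abs_of_nonneg hε, abs_sub_comm]
  exact mul_le_mul_of_nonneg_left (abs_norm_sub_norm_le x y) hε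

theorem Real.le_sSup_of_le_of_nonpos {s : Set ℝ} {a b : ℝ} (hb : b ∈ s) (hab : a ≤ b)
    (ha : a ≤ 0) : a ≤ sSup s := by
  by_cases hs : BddAbove s
  · exact hab.trans (le_csSup hs hb)
  · rwa [Real.sSup_of_not_bddAbove hs]

section Subsolutions

variable {N : ℕ} {H : Euc N × Euc N → ℝ} {a lam : ℝ} {u v : Euc N → ℝ}

theorem LocallyLipschitz.exists_eventually_norm_gradient_le {f : Euc N → ℝ}
    (hf : LocallyLipschitz f) (x₀ : Euc N) : ∃ K : ℝ≥0, ∀ᶠ x in 𝓝 x₀, ‖gradient f x‖ ≤ K := by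
  obtain ⟨K, t, ht, hlip⟩ := hf x₀
  refine ⟨K, (eventually_eventually_nhds.2 ht).mono fun x hx => ?_⟩
  rw [norm_gradient_eq_norm_fderiv]
  exact norm_fderiv_le_of_lipschitzOn ℝ hx hlip

theorem isSubsol_const (hH : ∀ x, H (x, 0) ≤ a) (c : ℝ) : IsSubsol H a fun _ => c :=
  ⟨.const c, .of_forall fun x _ => by rw [gradient_fun_const]; exact hH x⟩

theorem IsSubsol.sub_const (hu : IsSubsol H a u) (c : ℝ) : IsSubsol H a fun x => u x - c := by
  refine ⟨hu.1.sub (.const c), hu.2.mono fun x hx hdx => ?_⟩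
  have hgrad : gradient (fun y => u y - c) x = gradient u x := by
    rw [gradient, gradient, fderiv_sub_const]
  rw [hgrad]
  exact hx (by simpa using hdx.add_const c)

theorem IsSubsol.min_of_ae (hu : IsSubsol H a u) (hv : LocallyLipschitz v)
    (hQv : ∀ᵐ x, DifferentiableAt ℝ v x → v x ≤ u x → H (x, gradient v x) ≤ a) :
    IsSubsol H a fun x => min (u x) (v x) :=
  ⟨hu.1.min hv, hu.1.ae_min_of_ae (Q := fun x _ p => H (x, p) ≤ a) hv
    (hu.2.mono fun _ hx hdx _ => hx hdx) hQv⟩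

theorem IsSubsol.isDiscSubsol (hu : IsSubsol H a u) (hle : ∀ x, lam * u x + a ≤ 0) :
    IsDiscSubsol H lam u :=
  ⟨hu.1, hu.2.mono fun x hx hdx => by linarith [hx hdx, hle x]⟩

theorem IsDiscSubsol.max_const (hu : IsDiscSubsol H lam u) {c : ℝ}
    (hc : ∀ x, u x ≤ c → lam * c + H (x, 0) ≤ 0) : IsDiscSubsol H lam fun x => max (u x) c :=
  ⟨hu.1.max_const c, hu.1.ae_max_of_ae (Q := fun x s p => lam * s + H (x, p) ≤ 0)
    (.const c) (hu.2.mono fun _ hx hdx _ => hx hdx)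
    (.of_forall fun x _ hx => by rw [gradient_fun_const]; exact hc x hx)⟩

theorem IsSubsol.lt_of_forall_lt (hH : Continuous H) {m : ℝ} {x₀ : Euc N}
    (hx₀ : ∀ p, m < H (x₀, p)) (hu : IsSubsol H a u) : m < a := by
  by_contra! ham
  obtain ⟨K, hK⟩ := hu.1.exists_eventually_norm_gradient_le x₀
  have hnear : ∀ᶠ x in 𝓝 x₀, ∀ p ∈ closedBall (0 : Euc N) K, a < H (x, p) :=
    (isCompact_closedBall _ _).eventually_forall_of_forall_eventually fun p _ =>
      hH.continuousAt.eventually (lt_mem_nhds (ham.trans_lt (hx₀ p)))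
  obtain ⟨x, hxH, hxK, hx⟩ := exists_of_ae_of_eventually_nhds
    (hu.2.and hu.1.ae_differentiableAt_s3) (hK.and hnear)
  exact (hxH.1 hxH.2).not_gt (hx _ (mem_closedBall_zero_iff.2 hxK))

theorem IsSubsol.lipschitzOnWith_ball (hu : IsSubsol H a u) {R b : ℝ} {r : ℝ≥0}
    (hcoer : ∀ x p : Euc N, ‖x‖ ≤ R → r ≤ ‖p‖ → b ≤ H (x, p)) (hab : a < b) :
    LipschitzOnWith r u (ball 0 R) := by
  refine hu.1.lipschitzOnWith_ball_of_ae_norm_fderiv_le (hu.2.mono fun x hx hxR => ?_)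
  by_cases hdx : DifferentiableAt ℝ u x
  · rw [← norm_gradient_eq_norm_fderiv]
    by_contra! hr
    exact (hx hdx).not_gt (hab.trans_le (hcoer x _ (mem_ball_zero_iff.1 hxR).le hr.le))
  · simp [fderiv_zero_of_not_differentiableAt hdx]

theorem IsSubsol.exists_isDiscSubsol_forall_ge {m ε R : ℝ} {r : ℝ≥0} {w : Euc N → ℝ}
    (hw : IsSubsol H a w) (hwlip : LipschitzOnWith r w (ball 0 R))
    (hε : 0 < ε) (hR : 0 < R) (hout : ∀ x : Euc N, R ≤ ‖x‖ → ∀ p : Euc N, ‖p‖ ≤ ε → H (x, p) ≤ m)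
    (hma : m < a) (hm : m ≤ 0) (hal : a ≤ lam) (hlam : 0 ≤ lam) :
    ∃ v, IsDiscSubsol H lam v ∧ ∀ x, -((2 * r + ε) * R + 2) ≤ v x := by
  set C := (2 * r + ε) * R + 2
  set w' := fun x => w x - (w 0 + (r + ε) * R + 1)
  set ψ := fun x : Euc N => -1 - ε * ‖x‖
  have hw' (x : Euc N) (hx : ‖x‖ < R) : w' x < ψ x ∧ -C < w' x := by
    have hdist := hwlip.dist_le_mul x (mem_ball_zero_iff.2 hx) 0 (mem_ball_self hR)
    rw [Real.dist_eq, dist_zero_right, abs_le] at hdist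
    have : (r : ℝ) * ‖x‖ ≤ r * R := by gcongr
    constructor <;> nlinarith [hdist.1, hdist.2]
  have hψlip : LipschitzWith (Real.toNNReal ε) ψ := lipschitzWith_const_sub_mul_norm (-1) hε.le
  have hψgrad (x : Euc N) : ‖gradient ψ x‖ ≤ ε := by
    simpa [hε.le] using norm_gradient_le_of_lipschitzWith hψlip x
  set v₁ := fun x => min (w' x) (ψ x)
  have hv₁ : IsSubsol H a v₁ := (hw.sub_const _).min_of_ae hψlip.locallyLipschitz <|
    .of_forall fun x _ hx => (hout x (not_lt.1 fun hxR => (hw' x hxR).1.not_ge hx) _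
      (hψgrad x)).trans hma.le
  have hv₁le (x : Euc N) : v₁ x ≤ -1 :=
    (min_le_right _ _).trans (by simp only [ψ]; nlinarith [norm_nonneg x])
  refine ⟨fun x => max (v₁ x) (-C), (hv₁.isDiscSubsol fun x => ?_).max_const fun x hx => ?_,
    fun x => le_max_right _ _⟩
  · nlinarith [hv₁le x]
  · have hxR : R ≤ ‖x‖ := by
      by_contra! hxR
      refine hx.not_gt (lt_min (hw' x hxR).2 ?_)
      have : ε * ‖x‖ ≤ ε * R := by gcongr
      simp only [ψ, C]
      nlinarith [r.coe_nonneg]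
    have hC : 0 ≤ C := by positivity
    nlinarith [hout x hxR 0 (by simpa using hε.le)]

end Subsolutions

theorem stmt3_general {N : ℕ} (H : Euc N × Euc N → ℝ)
    (hA1 : Continuous H)
    (hA2coer : ∀ R : ℝ, 0 < R → ∀ C : ℝ, ∃ r : ℝ, ∀ x p : Euc N,
      ‖x‖ ≤ R → r ≤ ‖p‖ → C ≤ H (x, p))
    (hA3 : ∃ ε > (0 : ℝ), ∃ m : ℝ,
      (∃ R : ℝ, ∀ x : Euc N, R ≤ ‖x‖ → ∀ p : Euc N, ‖p‖ ≤ ε → H (x, p) ≤ m) ∧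
      (∃ x₀ : Euc N, ∀ p : Euc N, m < H (x₀, p)))
    (hcrit : sInf {a : ℝ | ∃ u : Euc N → ℝ, IsSubsol H a u} = 0)
    (um : ℝ → Euc N → ℝ)
    (hum : ∀ lam : ℝ, 0 < lam → ∀ x : Euc N,
      um lam x = sSup {r : ℝ | ∃ v : Euc N → ℝ, IsDiscSubsol H lam v ∧ v x = r})
 :
    ∃ C : ℝ, 0 < C ∧ ∀ lam : ℝ, 0 < lam → ∀ x : Euc N, -C ≤ um lam x := by
  obtain ⟨ε, hε, m, ⟨R, hR⟩, x₀, hx₀⟩ := hA3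
  set R₁ := |R| + 1
  have hR₁ : 0 < R₁ := by positivity
  have hout (x : Euc N) (hx : R₁ ≤ ‖x‖) : ∀ p : Euc N, ‖p‖ ≤ ε → H (x, p) ≤ m :=
    hR x (by linarith [le_abs_self R])
  obtain ⟨M, hM⟩ := (hA1.comp (Continuous.prodMk_left 0)).bddAbove_range_of_forall_norm_ge
    fun x hx => hout x hx 0 (by simpa using hε.le)
  have hne : {a : ℝ | ∃ u : Euc N → ℝ, IsSubsol H a u}.Nonempty :=
    ⟨M, _, isSubsol_const (fun x => hM (mem_range_self x)) 0⟩
  have hm : m ≤ 0 := hcrit ▸ le_csInf hne fun a ⟨_, hu⟩ => (hu.lt_of_forall_lt hA1 hx₀).le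
  obtain ⟨r, hr⟩ := hA2coer R₁ hR₁ 1
  refine ⟨(2 * r.toNNReal + ε) * R₁ + 2, by positivity, fun lam hlam x => ?_⟩
  obtain ⟨a, ⟨w, hw⟩, ha⟩ := exists_lt_of_csInf_lt hne (hcrit ▸ lt_min hlam one_pos)
  have hwlip := hw.lipschitzOnWith_ball (r := r.toNNReal)
    (fun x p hx hp => hr x p hx ((Real.le_coe_toNNReal r).trans hp))
    (ha.trans_le (min_le_right _ _))
  obtain ⟨v, hv, hvC⟩ := hw.exists_isDiscSubsol_forall_ge hwlip hε hR₁ hout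
    (hw.lt_of_forall_lt hA1 hx₀) hm (ha.le.trans (min_le_left _ _)) hlam.le
  rw [hum lam hlam x]
  exact Real.le_sSup_of_le_of_nonpos ⟨v, hv, rfl⟩ (hvC x) (neg_nonpos.2 (by positivity))

theorem stmt3 {N : ℕ} (hN : 1 ≤ N) (H : Euc N × Euc N → ℝ)
    (hA1 : Continuous H)
    (hA2conv : ∀ x : Euc N, ConvexOn ℝ Set.univ fun p => H (x, p))
    (hA2coer : ∀ R : ℝ, 0 < R → ∀ C : ℝ, ∃ r : ℝ, ∀ x p : Euc N,
      ‖x‖ ≤ R → r ≤ ‖p‖ → C ≤ H (x, p))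
    (hA3 : ∃ ε > (0 : ℝ), ∃ m : ℝ,
      (∃ R : ℝ, ∀ x : Euc N, R ≤ ‖x‖ → ∀ p : Euc N, ‖p‖ ≤ ε → H (x, p) ≤ m) ∧
      (∃ x₀ : Euc N, ∀ p : Euc N, m < H (x₀, p)))
    (hcrit : sInf {a : ℝ | ∃ u : Euc N → ℝ, IsSubsol H a u} = 0)
    (um : ℝ → Euc N → ℝ)
    (hum : ∀ lam : ℝ, 0 < lam → ∀ x : Euc N,
      um lam x = sSup {r : ℝ | ∃ v : Euc N → ℝ, IsDiscSubsol H lam v ∧ v x = r})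
 :
    ∃ C : ℝ, 0 < C ∧ ∀ lam : ℝ, 0 < lam → ∀ x : Euc N, -C ≤ um lam x :=
  stmt3_general H hA1 hA2coer hA3 hcrit um hum

end
end
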